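/- Suppose G_{α₀} is μ-strongly convex for some α₀ > 0 and μ > 0, each f_k is L-smooth, and C₁ > 0 satisfies ‖∇F(𝐱_*^β + s(𝐱_*^α − 𝐱_*^β))‖ ≤ C₁ for all s ∈ [0,1], α, β ∈ (0, α₀]. Let {α(t)} be a non-increasing positive stepsize sequence with α(0) ≤ min{(1+λ_m(W))/L, α₀}, let 𝐱(t+1) = 𝐱(t) − ∇G_{α(t)}(𝐱(t)), and suppose aₙ > 0 and t₀ ∈ ℕ are such that α(t) ≥ aₙ for all t ≤ t₀. Then ‖𝐱(t₀+1) − 𝐱_*^{α(t₀+1)}‖ ≤ ‖𝐱(0) − 𝐱_*^{α(0)}‖ + (2α₀C₁/(μ aₙ)) (α(0) − α(t₀+1)). -/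

import Mathlib

open Finset Set
open scoped RealInnerProductSpace

noncomputable section

/-- The quadratic penalty `(1/2) 𝐱ᵀ (I − W ⊗ I_n) 𝐱` on the stacked space `ℝ^{nm}`,
where `𝐱 = (x_1, …, x_m)` is indexed by pairs `(k, i)`. -/
def stackedQuad (m n : ℕ) (W : Matrix (Fin m) (Fin m) ℝ)
    (x : EuclideanSpace ℝ (Fin m × Fin n)) : ℝ :=
  (1 / 2) * (‖x‖ ^ 2 - ∑ k : Fin m, ∑ j : Fin m, W k j * ∑ i : Fin n, x (k, i) * x (j, i))

/-- `F(𝐱) = (1/m) ∑ₖ f_k(x_k)` on the stacked space `ℝ^{nm}`. -/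
def stackedF (m n : ℕ) (f : Fin m → EuclideanSpace ℝ (Fin n) → ℝ)
    (x : EuclideanSpace ℝ (Fin m × Fin n)) : ℝ :=
  (1 / (m : ℝ)) * ∑ k : Fin m, f k (WithLp.toLp 2 (fun i => x (k, i)))

/-- `G_α(𝐱) = α F(𝐱) + (1/2) 𝐱ᵀ (I − W ⊗ I_n) 𝐱`. -/
def DGDG (m n : ℕ) (W : Matrix (Fin m) (Fin m) ℝ)
    (f : Fin m → EuclideanSpace ℝ (Fin n) → ℝ) (α : ℝ)
    (x : EuclideanSpace ℝ (Fin m × Fin n)) : ℝ :=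
  α * stackedF m n f x + stackedQuad m n W x

/-- `g` is `μ`-strongly convex: `g − (μ/2)‖·‖²` is convex. -/
def StrongConvexWith {E : Type*} [NormedAddCommGroup E] [InnerProductSpace ℝ E]
    (μ : ℝ) (g : E → ℝ) : Prop :=
  ConvexOn ℝ Set.univ (fun x => g x - μ / 2 * ‖x‖ ^ 2)

/-!
For `0 ≤ a ≤ α₀` one has `G_a = (a/α₀) G_{α₀} + (1 - a/α₀) Q` with `Q(𝐱) = ½⟪(I - W ⊗ I)𝐱, 𝐱⟫`
convex, so `G_a` is `μa/α₀`-strongly convex. It also satisfies the quadratic upper bound with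
constant `aL + 1 - λ ≤ 2`, so by co-coercivity of its gradient (Baillon–Haddad) the unit gradient
step is nonexpansive: `‖𝐱(t+1) - 𝐱_*^{α(t)}‖ ≤ ‖𝐱(t) - 𝐱_*^{α(t)}‖`. Since
`∇G_a(𝐱_*^b) = (a - b) ∇F(𝐱_*^b)`, strong monotonicity of `∇G_a` moves the minimiser by at most
`α₀ C₁ (a - b) / (μ a)` when the stepsize drops from `a` to `b`. The triangle inequality and
telescoping over `t ≤ t₀` give the bound.
-/

theorem StrongConvexWith.convexOn {E : Type*} [NormedAddCommGroup E] [InnerProductSpace ℝ E]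
    {μ : ℝ} {g : E → ℝ} (hsc : StrongConvexWith μ g) (hμ : 0 ≤ μ) : ConvexOn ℝ univ g :=
  (strongConvexOn_iff_convex.2 hsc).convexOn fun r => by dsimp; positivity

section Gradient

variable {E : Type*} [NormedAddCommGroup E] [InnerProductSpace ℝ E] [CompleteSpace E]
  {g h : E → ℝ} {g' h' x : E}

theorem HasGradientAt.add (hg : HasGradientAt g g' x) (hh : HasGradientAt h h' x) :
    HasGradientAt (fun z => g z + h z) (g' + h') x := by
  rw [hasGradientAt_iff_hasFDerivAt] at *
  simpa only [map_add] using hg.fun_add hh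

theorem HasGradientAt.sub (hg : HasGradientAt g g' x) (hh : HasGradientAt h h' x) :
    HasGradientAt (fun z => g z - h z) (g' - h') x := by
  rw [hasGradientAt_iff_hasFDerivAt] at *
  simpa only [map_sub] using hg.fun_sub hh

theorem HasGradientAt.const_mul (c : ℝ) (hg : HasGradientAt g g' x) :
    HasGradientAt (fun z => c * g z) (c • g') x := by
  rw [hasGradientAt_iff_hasFDerivAt] at *
  simpa only [map_smul] using hg.const_mul c

theorem hasGradientAt_norm_sq (x : E) : HasGradientAt (fun z : E => ‖z‖ ^ 2) ((2 : ℝ) • x) x := by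
  rw [hasGradientAt_iff_hasFDerivAt, map_smul]
  exact (hasStrictFDerivAt_norm_sq x).hasFDerivAt.congr_fderiv (by ext; simp)

end Gradient

section Convex

variable {E : Type*} [NormedAddCommGroup E] [InnerProductSpace ℝ E] [CompleteSpace E]
  {g : E → ℝ} {G : E → E} {gx gy x y : E} {μ ℓ : ℝ}

theorem ConvexOn.add_inner_le (hconv : ConvexOn ℝ univ g) (hx : HasGradientAt g gx x) (y : E) :
    g x + ⟪gx, y - x⟫ ≤ g y := by
  set φ : ℝ →ᵃ[ℝ] E := AffineMap.lineMap x y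
  have hline : HasDerivAt (g ∘ φ) ⟪gx, y - x⟫ 0 := by
    have := (AffineMap.lineMap_apply_zero x y (k := ℝ)).symm ▸ hx.hasFDerivAt
    simpa using this.comp_hasDerivAt (0 : ℝ) AffineMap.hasDerivAt_lineMap
  have hslope := (hconv.comp_affineMap φ).deriv_le_slope
    (mem_univ 0) (mem_univ 1) zero_lt_one hline.differentiableAt
  rw [hline.deriv, slope_def_field] at hslope
  simp only [φ, Function.comp_apply, AffineMap.lineMap_apply_one, AffineMap.lineMap_apply_zero,
    sub_zero, div_one] at hslope
  linarith

theorem ConvexOn.inner_sub_nonneg (hconv : ConvexOn ℝ univ g) (hx : HasGradientAt g gx x)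
    (hy : HasGradientAt g gy y) : 0 ≤ ⟪gx - gy, x - y⟫ := by
  have hxy := hconv.add_inner_le hx y
  have hyx := hconv.add_inner_le hy x
  rw [← neg_sub x y, inner_neg_right] at hxy
  rw [inner_sub_left]
  linarith

theorem StrongConvexWith.mul_norm_sq_le_inner (hsc : StrongConvexWith μ g)
    (hx : HasGradientAt g gx x) (hy : HasGradientAt g gy y) :
    μ * ‖x - y‖ ^ 2 ≤ ⟪gx - gy, x - y⟫ := by
  have hgrad : ∀ {z gz : E}, HasGradientAt g gz z →
      HasGradientAt (fun w => g w - μ / 2 * ‖w‖ ^ 2) (gz - μ • z) z := fun hz => by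
    convert hz.sub ((hasGradientAt_norm_sq _).const_mul (μ / 2)) using 2
    rw [smul_smul]
    ring_nf
  have := ConvexOn.inner_sub_nonneg hsc (hgrad hx) (hgrad hy)
  rw [sub_sub_sub_comm, ← smul_sub, inner_sub_left, real_inner_smul_left,
    real_inner_self_eq_norm_sq] at this
  linarith

theorem StrongConvexWith.mul_norm_sub_le (hsc : StrongConvexWith μ g)
    (hx : HasGradientAt g gx x) (hy : HasGradientAt g gy y) :
    μ * ‖x - y‖ ≤ ‖gx - gy‖ := by
  rcases (norm_nonneg (x - y)).eq_or_lt with h0 | hpos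
  · rw [← h0, mul_zero]
    exact norm_nonneg _
  · refine le_of_mul_le_mul_right ?_ hpos
    calc μ * ‖x - y‖ * ‖x - y‖ = μ * ‖x - y‖ ^ 2 := by ring
      _ ≤ ⟪gx - gy, x - y⟫ := hsc.mul_norm_sq_le_inner hx hy
      _ ≤ ‖gx - gy‖ * ‖x - y‖ := real_inner_le_norm _ _

theorem le_add_inner_add_mul_norm_sq (hG : ∀ z, HasGradientAt g (G z) z)
    (hlip : ∀ u v, ‖G u - G v‖ ≤ ℓ * ‖u - v‖) (x y : E) :
    g y ≤ g x + ⟪G x, y - x⟫ + ℓ / 2 * ‖y - x‖ ^ 2 := by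
  set v := y - x
  let φ : ℝ → ℝ := fun s => g (x + s • v) - s * ⟪G x, v⟫ - ℓ / 2 * s ^ 2 * ‖v‖ ^ 2
  have hφ : ∀ s, HasDerivAt φ (⟪G (x + s • v) - G x, v⟫ - ℓ * s * ‖v‖ ^ 2) s := by
    intro s
    have hline : HasDerivAt (fun s : ℝ => x + s • v) v s := by
      simpa using ((hasDerivAt_id s).smul_const v).const_add x
    have hgs : HasDerivAt (fun s : ℝ => g (x + s • v)) ⟪G (x + s • v), v⟫ s := by
      have h := (hG (x + s • v)).hasFDerivAt.comp_hasDerivAt s hline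
      rwa [InnerProductSpace.toDual_apply_apply] at h
    refine ((hgs.fun_sub ((hasDerivAt_id s).mul_const ⟪G x, v⟫)).fun_sub
      (((hasDerivAt_pow 2 s).const_mul (ℓ / 2)).mul_const (‖v‖ ^ 2))).congr_deriv ?_
    simp only [inner_sub_left, Nat.cast_ofNat]
    ring
  have hanti : AntitoneOn φ (Ici 0) := by
    refine antitoneOn_of_hasDerivWithinAt_nonpos (convex_Ici 0)
      (fun s _ => (hφ s).continuousAt.continuousWithinAt) (fun s _ => (hφ s).hasDerivWithinAt)
      fun s hs => ?_
    rw [interior_Ici, Set.mem_Ioi] at hs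
    have hlip_s : ‖G (x + s • v) - G x‖ ≤ ℓ * s * ‖v‖ := by
      simpa [norm_smul, abs_of_pos hs, mul_assoc] using hlip (x + s • v) x
    nlinarith [real_inner_le_norm (G (x + s • v) - G x) v, norm_nonneg v]
  have h10 : φ 1 ≤ φ 0 := hanti self_mem_Ici (zero_le_one' ℝ) zero_le_one
  simp only [φ, v, one_smul, add_sub_cancel, one_mul, one_pow, mul_one, zero_smul, add_zero,
    zero_mul, sub_zero, ne_eq, OfNat.ofNat_ne_zero, not_false_eq_true, zero_pow,
    mul_zero] at h10
  linarith

theorem ConvexOn.norm_sq_le_mul_inner (hconv : ConvexOn ℝ univ g)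
    (hG : ∀ z, HasGradientAt g (G z) z) (hℓ : 0 < ℓ)
    (hup : ∀ x y, g y ≤ g x + ⟪G x, y - x⟫ + ℓ / 2 * ‖y - x‖ ^ 2) (x y : E) :
    ‖G x - G y‖ ^ 2 ≤ ℓ * ⟪G x - G y, x - y⟫ := by
  -- compare the convexity lower bound and the quadratic upper bound at `b - ℓ⁻¹ (G b - G a)`
  have key : ∀ a b, g a + ⟪G a, b - a⟫ + ‖G b - G a‖ ^ 2 / (2 * ℓ) ≤ g b := by
    intro a b
    set d := G b - G a
    have hup' := hup b (b - ℓ⁻¹ • d)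
    have hlow := hconv.add_inner_le (hG a) (b - ℓ⁻¹ • d)
    have hd : ⟪G b, d⟫ - ⟪G a, d⟫ = ‖d‖ ^ 2 := by
      rw [← inner_sub_left, real_inner_self_eq_norm_sq]
    rw [sub_sub_cancel_left, norm_neg, norm_smul, mul_pow, Real.norm_eq_abs, sq_abs,
      inner_neg_right, real_inner_smul_right] at hup'
    rw [sub_right_comm, inner_sub_right, real_inner_smul_right] at hlow
    have h1 : ℓ / 2 * ((ℓ⁻¹) ^ 2 * ‖d‖ ^ 2) = ‖d‖ ^ 2 / (2 * ℓ) := by field_simp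
    have h2 : ℓ⁻¹ * ⟪G b, d⟫ - ℓ⁻¹ * ⟪G a, d⟫ = 2 * (‖d‖ ^ 2 / (2 * ℓ)) := by
      rw [← mul_sub, hd]
      field_simp
    linarith
  have hxy := key x y
  have hyx := key y x
  rw [← neg_sub x y, inner_neg_right, norm_sub_rev] at hxy
  have hsum : 2 * (‖G x - G y‖ ^ 2 / (2 * ℓ)) ≤ ⟪G x - G y, x - y⟫ := by
    rw [inner_sub_left]
    linarith
  calc ‖G x - G y‖ ^ 2 = ℓ * (2 * (‖G x - G y‖ ^ 2 / (2 * ℓ))) := by field_simp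
    _ ≤ ℓ * ⟪G x - G y, x - y⟫ := mul_le_mul_of_nonneg_left hsum hℓ.le

theorem ConvexOn.norm_gradient_step_sub_le (hconv : ConvexOn ℝ univ g)
    (hG : ∀ z, HasGradientAt g (G z) z) (hℓ : ℓ ≤ 2)
    (hup : ∀ x y, g y ≤ g x + ⟪G x, y - x⟫ + ℓ / 2 * ‖y - x‖ ^ 2) (x y : E) :
    ‖(x - G x) - (y - G y)‖ ≤ ‖x - y‖ := by
  have hup₂ : ∀ x y, g y ≤ g x + ⟪G x, y - x⟫ + 2 / 2 * ‖y - x‖ ^ 2 := fun x y => by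
    nlinarith [hup x y, sq_nonneg ‖y - x‖]
  have hco := hconv.norm_sq_le_mul_inner hG two_pos hup₂ x y
  rw [← sq_le_sq₀ (norm_nonneg _) (norm_nonneg _), sub_sub_sub_comm, norm_sub_sq_real,
    real_inner_comm]
  linarith

end Convex

theorem norm_sub_le_add_of_nonexpansive_of_drift {E : Type*} [SeminormedAddCommGroup E]
    {x z : ℕ → E} {s : ℕ → ℝ} {c : ℝ} {T : ℕ}
    (hx : ∀ t ≤ T, ‖x (t + 1) - z t‖ ≤ ‖x t - z t‖)
    (hz : ∀ t ≤ T, ‖z t - z (t + 1)‖ ≤ c * (s t - s (t + 1))) :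
    ‖x (T + 1) - z (T + 1)‖ ≤ ‖x 0 - z 0‖ + c * (s 0 - s (T + 1)) := by
  have hstep : ∀ t ≤ T, ‖x (t + 1) - z (t + 1)‖ ≤ ‖x t - z t‖ + c * (s t - s (t + 1)) :=
    fun t ht => (norm_sub_le_norm_sub_add_norm_sub _ (z t) _).trans
      (add_le_add (hx t ht) (hz t ht))
  induction T with
  | zero => simpa using hstep 0 le_rfl
  | succ T ih =>
    have := ih (fun t ht => hx t (ht.trans T.le_succ)) (fun t ht => hz t (ht.trans T.le_succ))
      (fun t ht => hstep t (ht.trans T.le_succ))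
    linarith [hstep (T + 1) le_rfl]

section SymmetricQuadratic

variable {E : Type*} [NormedAddCommGroup E] [InnerProductSpace ℝ E] {T : E →L[ℝ] E}

theorem LinearMap.IsSymmetric.hasGradientAt_inner_self_div_two [CompleteSpace E]
    (hT : (T : E →ₗ[ℝ] E).IsSymmetric) (x : E) :
    HasGradientAt (fun z => ⟪T z, z⟫ / 2) (T x) x := by
  have h : HasGradientAt (fun z => ⟪T z, z⟫) ((2 : ℝ) • T x) x := by
    rw [hasGradientAt_iff_hasFDerivAt]
    refine (T.hasFDerivAt.inner ℝ (hasFDerivAt_id x)).congr_fderiv ?_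
    ext v
    simp [two_smul, hT.apply_clm x v, real_inner_comm]
  simpa [div_eq_inv_mul, smul_smul] using h.const_mul 2⁻¹

theorem LinearMap.IsSymmetric.inner_self_div_two_eq (hT : (T : E →ₗ[ℝ] E).IsSymmetric)
    (x y : E) : ⟪T y, y⟫ / 2 = ⟪T x, x⟫ / 2 + ⟪T x, y - x⟫ + ⟪T (y - x), y - x⟫ / 2 := by
  have hsymm : ⟪T (y - x), x⟫ = ⟪T x, y - x⟫ := by
    rw [hT.apply_clm, real_inner_comm]
  conv_lhs => rw [← add_sub_cancel x y]
  rw [map_add, inner_add_left, inner_add_right, inner_add_right, hsymm]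
  ring

theorem LinearMap.IsSymmetric.convexOn_inner_self_div_two (hT : (T : E →ₗ[ℝ] E).IsSymmetric)
    (hpos : ∀ z, 0 ≤ ⟪T z, z⟫) : ConvexOn ℝ univ (fun z => ⟪T z, z⟫ / 2) := by
  refine ⟨convex_univ, fun x _ y _ a b ha hb hab => ?_⟩
  set z := a • x + b • y
  have hx := hT.inner_self_div_two_eq z x
  have hy := hT.inner_self_div_two_eq z y
  have hz : a * ⟪T z, x - z⟫ + b * ⟪T z, y - z⟫ = 0 := by
    rw [← real_inner_smul_right, ← real_inner_smul_right, ← inner_add_right]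
    convert inner_zero_right (T z)
    obtain rfl : b = 1 - a := by linarith
    module
  simp only [smul_eq_mul]
  calc ⟪T z, z⟫ / 2 = (a + b) * (⟪T z, z⟫ / 2) + (a * ⟪T z, x - z⟫ + b * ⟪T z, y - z⟫) := by
        rw [hab, hz]
        ring
    _ ≤ a * (⟪T x, x⟫ / 2) + b * (⟪T y, y⟫ / 2) := by
        rw [hx, hy]
        nlinarith [mul_nonneg ha (hpos (x - z)), mul_nonneg hb (hpos (y - z))]

end SymmetricQuadratic

theorem Matrix.IsSymm.sum_mul_inner_le_sum_norm_sq {ι V : Type*} [Fintype ι]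
    [NormedAddCommGroup V] [InnerProductSpace ℝ V] {W : Matrix ι ι ℝ} (hWsymm : W.IsSymm)
    (hWnonneg : ∀ i j, 0 ≤ W i j) (hWrow : ∀ i, ∑ j, W i j = 1) (v : ι → V) :
    ∑ k, ∑ j, W k j * ⟪v k, v j⟫ ≤ ∑ k, ‖v k‖ ^ 2 := by
  have hcol : ∀ j, ∑ k, W k j = 1 := fun j => by
    simpa only [hWsymm.apply] using hWrow j
  calc ∑ k, ∑ j, W k j * ⟪v k, v j⟫
      ≤ ∑ k, ∑ j, (W k j * ‖v k‖ ^ 2 / 2 + W k j * ‖v j‖ ^ 2 / 2) := by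
        gcongr with k _ j _
        nlinarith [hWnonneg k j, real_inner_le_norm (v k) (v j), sq_nonneg (‖v k‖ - ‖v j‖)]
    _ = ∑ k, ‖v k‖ ^ 2 := by
        simp only [Finset.sum_add_distrib, ← Finset.sum_div, ← Finset.sum_mul, hWrow, one_mul]
        rw [Finset.sum_comm]
        simp only [← Finset.sum_mul, hcol, one_mul]
        ring

section Stacked

variable {m n : ℕ}

def stackedBlock (k : Fin m) :
    EuclideanSpace ℝ (Fin m × Fin n) →L[ℝ] EuclideanSpace ℝ (Fin n) :=
  LinearMap.toContinuousLinearMap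
    { toFun := fun x => WithLp.toLp 2 fun i => x (k, i)
      map_add' := fun _ _ => rfl
      map_smul' := fun _ _ => rfl }

@[simp]
theorem stackedBlock_apply (k : Fin m) (x : EuclideanSpace ℝ (Fin m × Fin n)) (i : Fin n) :
    stackedBlock k x i = x (k, i) := rfl

theorem sum_norm_stackedBlock_sq (x : EuclideanSpace ℝ (Fin m × Fin n)) :
    ∑ k, ‖stackedBlock k x‖ ^ 2 = ‖x‖ ^ 2 := by
  simp only [EuclideanSpace.real_norm_sq_eq, stackedBlock_apply, Fintype.sum_prod_type]

theorem inner_stackedBlock_stackedBlock (x y : EuclideanSpace ℝ (Fin m × Fin n)) (k j : Fin m) :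
    ⟪stackedBlock k x, stackedBlock j y⟫ = ∑ i, x (k, i) * y (j, i) := by
  simp only [PiLp.inner_apply, stackedBlock_apply, RCLike.inner_apply, conj_trivial, mul_comm]

/-- The operator `I - W ⊗ I_n`. -/
def stackedLaplacian (W : Matrix (Fin m) (Fin m) ℝ) :
    EuclideanSpace ℝ (Fin m × Fin n) →L[ℝ] EuclideanSpace ℝ (Fin m × Fin n) :=
  LinearMap.toContinuousLinearMap
    { toFun := fun x => WithLp.toLp 2 fun p => x p - ∑ j, W p.1 j * x (j, p.2)
      map_add' := fun x y => by
        ext p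
        simp only [PiLp.add_apply, mul_add, Finset.sum_add_distrib]
        ring
      map_smul' := fun c x => by
        ext p
        simp only [PiLp.smul_apply, smul_eq_mul, RingHom.id_apply, mul_sub, Finset.mul_sum,
          mul_left_comm] }

variable {W : Matrix (Fin m) (Fin m) ℝ}

theorem inner_stackedLaplacian (x y : EuclideanSpace ℝ (Fin m × Fin n)) :
    ⟪stackedLaplacian W x, y⟫ = ⟪x, y⟫ - ∑ k, ∑ j, W k j * ∑ i, y (k, i) * x (j, i) := by
  have hL : ∀ p, stackedLaplacian W x p = x p - ∑ j, W p.1 j * x (j, p.2) := fun _ => rfl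
  simp only [PiLp.inner_apply, RCLike.inner_apply, conj_trivial, hL, Fintype.sum_prod_type,
    mul_sub, Finset.sum_sub_distrib, Finset.mul_sum]
  congr 1
  refine Finset.sum_congr rfl fun k _ => ?_
  rw [Finset.sum_comm]
  exact Finset.sum_congr rfl fun j _ => Finset.sum_congr rfl fun i _ => by ring

theorem stackedQuad_eq (x : EuclideanSpace ℝ (Fin m × Fin n)) :
    stackedQuad m n W x = ⟪stackedLaplacian W x, x⟫ / 2 := by
  rw [inner_stackedLaplacian, real_inner_self_eq_norm_sq, stackedQuad]
  ring

theorem isSymmetric_stackedLaplacian (hWsymm : W.IsSymm) :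
    (stackedLaplacian W : EuclideanSpace ℝ (Fin m × Fin n) →L[ℝ] _).toLinearMap.IsSymmetric :=
  fun x y => by
    simp only [ContinuousLinearMap.coe_coe]
    rw [real_inner_comm (stackedLaplacian W y), inner_stackedLaplacian, inner_stackedLaplacian,
      real_inner_comm y, Finset.sum_comm]
    simp only [hWsymm.apply, mul_comm (x _)]

theorem inner_stackedLaplacian_self_nonneg (hWsymm : W.IsSymm) (hWnonneg : ∀ i j, 0 ≤ W i j)
    (hWrow : ∀ i, ∑ j, W i j = 1) (x : EuclideanSpace ℝ (Fin m × Fin n)) :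
    0 ≤ ⟪stackedLaplacian W x, x⟫ := by
  rw [inner_stackedLaplacian, real_inner_self_eq_norm_sq, ← sum_norm_stackedBlock_sq, sub_nonneg]
  simpa only [inner_stackedBlock_stackedBlock] using
    hWsymm.sum_mul_inner_le_sum_norm_sq hWnonneg hWrow fun k => stackedBlock k x

theorem convexOn_stackedQuad (hWsymm : W.IsSymm) (hWnonneg : ∀ i j, 0 ≤ W i j)
    (hWrow : ∀ i, ∑ j, W i j = 1) : ConvexOn ℝ univ (stackedQuad m n W) := by
  simpa only [← stackedQuad_eq] using
    (isSymmetric_stackedLaplacian hWsymm).convexOn_inner_self_div_two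
      (inner_stackedLaplacian_self_nonneg hWsymm hWnonneg hWrow)

theorem hasGradientAt_stackedQuad (hWsymm : W.IsSymm) (x : EuclideanSpace ℝ (Fin m × Fin n)) :
    HasGradientAt (stackedQuad m n W) (stackedLaplacian W x) x := by
  simpa only [← stackedQuad_eq] using
    (isSymmetric_stackedLaplacian hWsymm).hasGradientAt_inner_self_div_two x

theorem stackedQuad_le {lam : ℝ} (hWsymm : W.IsSymm)
    (hlam : ∀ u : EuclideanSpace ℝ (Fin m × Fin n),
      lam * ‖u‖ ^ 2 ≤ ∑ k : Fin m, ∑ j : Fin m, W k j * ∑ i : Fin n, u (k, i) * u (j, i))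
    (x y : EuclideanSpace ℝ (Fin m × Fin n)) :
    stackedQuad m n W y ≤
      stackedQuad m n W x + ⟪stackedLaplacian W x, y - x⟫ + (1 - lam) / 2 * ‖y - x‖ ^ 2 := by
  have hupper : ⟪stackedLaplacian W (y - x), y - x⟫ ≤ (1 - lam) * ‖y - x‖ ^ 2 := by
    rw [inner_stackedLaplacian, real_inner_self_eq_norm_sq]
    linarith [hlam (y - x)]
  rw [stackedQuad_eq, stackedQuad_eq,
    (isSymmetric_stackedLaplacian hWsymm).inner_self_div_two_eq x y]
  linarith

variable {f : Fin m → EuclideanSpace ℝ (Fin n) → ℝ}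

theorem hasFDerivAt_stackedF (hdiff : ∀ k, Differentiable ℝ (f k))
    (x : EuclideanSpace ℝ (Fin m × Fin n)) :
    HasFDerivAt (stackedF m n f)
      ((1 / (m : ℝ)) • ∑ k, (fderiv ℝ (f k) (stackedBlock k x)).comp (stackedBlock k)) x :=
  HasFDerivAt.const_mul (HasFDerivAt.fun_sum fun k _ =>
    (hdiff k (stackedBlock k x)).hasFDerivAt.comp x (stackedBlock k).hasFDerivAt) _

theorem inner_gradient_stackedF (hdiff : ∀ k, Differentiable ℝ (f k))
    (x v : EuclideanSpace ℝ (Fin m × Fin n)) :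
    ⟪gradient (stackedF m n f) x, v⟫ =
      1 / (m : ℝ) * ∑ k, ⟪gradient (f k) (stackedBlock k x), stackedBlock k v⟫ := by
  simp [inner_gradient_left, (hasFDerivAt_stackedF hdiff x).fderiv]

theorem stackedF_le {L : ℝ} (hdiff : ∀ k, Differentiable ℝ (f k)) (hL : 0 ≤ L)
    (hsmooth : ∀ k, ∀ x y, ‖gradient (f k) x - gradient (f k) y‖ ≤ L * ‖x - y‖)
    (x y : EuclideanSpace ℝ (Fin m × Fin n)) :
    stackedF m n f y ≤
      stackedF m n f x + ⟪gradient (stackedF m n f) x, y - x⟫ + L / 2 * ‖y - x‖ ^ 2 := by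
  have hblock : ∀ k, f k (stackedBlock k y) ≤ f k (stackedBlock k x)
      + ⟪gradient (f k) (stackedBlock k x), stackedBlock k (y - x)⟫
      + L / 2 * ‖stackedBlock k (y - x)‖ ^ 2 := fun k => by
    simpa only [map_sub] using le_add_inner_add_mul_norm_sq
      (fun z => (hdiff k z).hasGradientAt) (hsmooth k) (stackedBlock k x) (stackedBlock k y)
  have hm : 1 / (m : ℝ) ≤ 1 := by simpa only [one_div] using Nat.cast_inv_le_one m
  have hsum := Finset.sum_le_sum fun k (_ : k ∈ Finset.univ) => hblock k
  simp only [Finset.sum_add_distrib, ← Finset.mul_sum, sum_norm_stackedBlock_sq] at hsum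
  rw [inner_gradient_stackedF hdiff]
  change 1 / (m : ℝ) * ∑ k, f k (stackedBlock k y) ≤
    1 / (m : ℝ) * ∑ k, f k (stackedBlock k x) + _ + _
  nlinarith [mul_le_mul_of_nonneg_left hsum (by positivity : (0 : ℝ) ≤ 1 / m),
    mul_le_mul_of_nonneg_right hm (by positivity : 0 ≤ L / 2 * ‖y - x‖ ^ 2)]

end Stacked
section DGD

variable {m n : ℕ} {W : Matrix (Fin m) (Fin m) ℝ} {f : Fin m → EuclideanSpace ℝ (Fin n) → ℝ}

theorem hasGradientAt_DGDG (hWsymm : W.IsSymm) (hdiff : ∀ k, Differentiable ℝ (f k)) (a : ℝ)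
    (x : EuclideanSpace ℝ (Fin m × Fin n)) :
    HasGradientAt (DGDG m n W f a)
      (a • gradient (stackedF m n f) x + stackedLaplacian W x) x :=
  ((hasFDerivAt_stackedF hdiff x).differentiableAt.hasGradientAt.const_mul a).add
    (hasGradientAt_stackedQuad hWsymm x)

theorem DGDG_le {L lam a : ℝ} (hWsymm : W.IsSymm) (hdiff : ∀ k, Differentiable ℝ (f k))
    (hL : 0 ≤ L) (hsmooth : ∀ k, ∀ x y, ‖gradient (f k) x - gradient (f k) y‖ ≤ L * ‖x - y‖)
    (hlam : ∀ u : EuclideanSpace ℝ (Fin m × Fin n),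
      lam * ‖u‖ ^ 2 ≤ ∑ k : Fin m, ∑ j : Fin m, W k j * ∑ i : Fin n, u (k, i) * u (j, i))
    (ha : 0 ≤ a) (x y : EuclideanSpace ℝ (Fin m × Fin n)) :
    DGDG m n W f a y ≤ DGDG m n W f a x + ⟪gradient (DGDG m n W f a) x, y - x⟫
      + (a * L + (1 - lam)) / 2 * ‖y - x‖ ^ 2 := by
  rw [(hasGradientAt_DGDG hWsymm hdiff a x).gradient, inner_add_left, real_inner_smul_left]
  have hF := mul_le_mul_of_nonneg_left (stackedF_le hdiff hL hsmooth x y) ha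
  have hQ := stackedQuad_le hWsymm hlam x y
  simp only [DGDG]
  linarith

theorem strongConvexWith_DGDG {μ α₀ a : ℝ} (hα₀ : 0 < α₀)
    (hGsc : StrongConvexWith μ (DGDG m n W f α₀)) (hWsymm : W.IsSymm)
    (hWnonneg : ∀ i j, 0 ≤ W i j) (hWrow : ∀ i, ∑ j, W i j = 1) (ha : 0 ≤ a) (haα₀ : a ≤ α₀) :
    StrongConvexWith (μ * a / α₀) (DGDG m n W f a) := by
  have hcoef : 0 ≤ 1 - a / α₀ := sub_nonneg.2 ((div_le_one hα₀).2 haα₀)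
  refine ((hGsc.smul (by positivity : 0 ≤ a / α₀)).add
    ((convexOn_stackedQuad hWsymm hWnonneg hWrow).smul hcoef)).congr fun z _ => ?_
  simp only [Pi.add_apply, smul_eq_mul, DGDG]
  field_simp
  ring

theorem norm_sub_le_of_gradient_DGDG_eq_zero {μ α₀ a b : ℝ} (hμ : 0 < μ) (hα₀ : 0 < α₀)
    (hGsc : StrongConvexWith μ (DGDG m n W f α₀)) (hWsymm : W.IsSymm)
    (hWnonneg : ∀ i j, 0 ≤ W i j) (hWrow : ∀ i, ∑ j, W i j = 1)
    (hdiff : ∀ k, Differentiable ℝ (f k)) (ha : a ∈ Ioc 0 α₀)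
    {u v : EuclideanSpace ℝ (Fin m × Fin n)}
    (hu : gradient (DGDG m n W f a) u = 0) (hv : gradient (DGDG m n W f b) v = 0) :
    ‖u - v‖ ≤ α₀ * ‖gradient (stackedF m n f) v‖ / (μ * a) * |a - b| := by
  have hG := hasGradientAt_DGDG hWsymm hdiff
  have hGav : a • gradient (stackedF m n f) v + stackedLaplacian W v
      = (a - b) • gradient (stackedF m n f) v := by
    rw [(hG b v).gradient] at hv
    rw [sub_smul, eq_sub_iff_add_eq, add_assoc, add_comm (stackedLaplacian W v), hv, add_zero]
  have hsc := (strongConvexWith_DGDG hα₀ hGsc hWsymm hWnonneg hWrow ha.1.le ha.2).mul_norm_sub_le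
    (hG a u) (hG a v)
  rw [← (hG a u).gradient, hu, hGav, zero_sub, norm_neg, norm_smul, Real.norm_eq_abs] at hsc
  have hμa : 0 < μ * a := mul_pos hμ ha.1
  rw [div_mul_eq_mul_div, le_div_iff₀ hμa]
  calc ‖u - v‖ * (μ * a) = α₀ * (μ * a / α₀ * ‖u - v‖) := by field_simp
    _ ≤ α₀ * (|a - b| * ‖gradient (stackedF m n f) v‖) := by gcongr
    _ = α₀ * ‖gradient (stackedF m n f) v‖ * |a - b| := by ring

theorem norm_gradient_step_DGDG_sub_le {μ α₀ L lam a : ℝ} (hμ : 0 ≤ μ) (hα₀ : 0 < α₀)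
    (hGsc : StrongConvexWith μ (DGDG m n W f α₀)) (hWsymm : W.IsSymm)
    (hWnonneg : ∀ i j, 0 ≤ W i j) (hWrow : ∀ i, ∑ j, W i j = 1)
    (hdiff : ∀ k, Differentiable ℝ (f k)) (hL : 0 ≤ L)
    (hsmooth : ∀ k, ∀ x y, ‖gradient (f k) x - gradient (f k) y‖ ≤ L * ‖x - y‖)
    (hlam : ∀ u : EuclideanSpace ℝ (Fin m × Fin n),
      lam * ‖u‖ ^ 2 ≤ ∑ k : Fin m, ∑ j : Fin m, W k j * ∑ i : Fin n, u (k, i) * u (j, i))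
    (ha : a ∈ Icc 0 α₀) (haL : a * L ≤ 1 + lam) (x y : EuclideanSpace ℝ (Fin m × Fin n)) :
    ‖(x - gradient (DGDG m n W f a) x) - (y - gradient (DGDG m n W f a) y)‖ ≤ ‖x - y‖ := by
  have hconv := (strongConvexWith_DGDG hα₀ hGsc hWsymm hWnonneg hWrow ha.1 ha.2).convexOn
    (by have := ha.1; positivity)
  exact hconv.norm_gradient_step_sub_le
    (fun z => (hasGradientAt_DGDG hWsymm hdiff a z).differentiableAt.hasGradientAt)
    (by linarith) (DGDG_le hWsymm hdiff hL hsmooth hlam ha.1) x y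

end DGD

theorem dgd_cumulative_tracking_general {m n : ℕ}
    (W : Matrix (Fin m) (Fin m) ℝ)
    (hWsymm : W.IsSymm)
    (hWnonneg : ∀ i j, 0 ≤ W i j)
    (hWrow : ∀ i, ∑ j, W i j = 1)
    (f : Fin m → EuclideanSpace ℝ (Fin n) → ℝ)
    (hdiff : ∀ k, Differentiable ℝ (f k))
    (L : ℝ) (hL : 0 < L)
    (hsmooth : ∀ k, ∀ x y, ‖gradient (f k) x - gradient (f k) y‖ ≤ L * ‖x - y‖)
    (lam : ℝ)
    (hlam : ∀ u : EuclideanSpace ℝ (Fin m × Fin n),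
      lam * ‖u‖ ^ 2 ≤ ∑ k : Fin m, ∑ j : Fin m, W k j * ∑ i : Fin n, u (k, i) * u (j, i))
    (μ α₀ : ℝ) (hμ : 0 < μ) (hα₀ : 0 < α₀)
    (hGsc : StrongConvexWith μ (DGDG m n W f α₀))
    (xstar : ℝ → EuclideanSpace ℝ (Fin m × Fin n))
    (hmin : ∀ a ∈ Set.Ioc (0 : ℝ) α₀, ∀ y, DGDG m n W f a (xstar a) ≤ DGDG m n W f a y)
    (C₁ : ℝ)
    (hC₁ : ∀ s ∈ Set.Icc (0 : ℝ) 1, ∀ a ∈ Set.Ioc (0 : ℝ) α₀, ∀ b ∈ Set.Ioc (0 : ℝ) α₀,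
      ‖gradient (stackedF m n f) (xstar b + s • (xstar a - xstar b))‖ ≤ C₁)
    (α : ℕ → ℝ) (hαpos : ∀ t, 0 < α t) (hαmono : ∀ t, α (t + 1) ≤ α t)
    (hα0 : α 0 ≤ min ((1 + lam) / L) α₀)
    (x : ℕ → EuclideanSpace ℝ (Fin m × Fin n))
    (hiter : ∀ t, x (t + 1) = x t - gradient (DGDG m n W f (α t)) (x t))
    (aN : ℝ) (haN : 0 < aN) (t₀ : ℕ)
    (hstep : ∀ t ≤ t₀, aN ≤ α t) :
    ‖x (t₀ + 1) - xstar (α (t₀ + 1))‖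
      ≤ ‖x 0 - xstar (α 0)‖ + (2 * α₀ * C₁ / (μ * aN)) * (α 0 - α (t₀ + 1)) := by
  have hαle : ∀ t, α t ≤ α 0 := fun t => antitone_nat_of_succ_le hαmono (Nat.zero_le t)
  have hαmem : ∀ t, α t ∈ Ioc 0 α₀ := fun t =>
    ⟨hαpos t, (hαle t).trans (hα0.trans (min_le_right _ _))⟩
  have hcrit : ∀ t, gradient (DGDG m n W f (α t)) (xstar (α t)) = 0 := fun t => by
    have hloc : IsLocalMin (DGDG m n W f (α t)) (xstar (α t)) :=
      Filter.Eventually.of_forall (hmin _ (hαmem t))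
    rw [gradient, hloc.fderiv_eq_zero, map_zero]
  refine norm_sub_le_add_of_nonexpansive_of_drift (z := fun t => xstar (α t)) (s := α)
    (fun t _ => ?_) (fun t ht => ?_)
  · have haL : α t * L ≤ 1 + lam :=
      (le_div_iff₀ hL).1 ((hαle t).trans (hα0.trans (min_le_left _ _)))
    simpa [hiter, hcrit t] using norm_gradient_step_DGDG_sub_le hμ.le hα₀ hGsc hWsymm hWnonneg
      hWrow hdiff hL.le hsmooth hlam (Ioc_subset_Icc_self (hαmem t)) haL (x t) (xstar (α t))
  · have hC : ‖gradient (stackedF m n f) (xstar (α (t + 1)))‖ ≤ C₁ := by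
      simpa using hC₁ 0 ⟨le_rfl, zero_le_one⟩ _ (hαmem t) _ (hαmem (t + 1))
    have hdrift := norm_sub_le_of_gradient_DGDG_eq_zero hμ hα₀ hGsc hWsymm hWnonneg hWrow hdiff
      (hαmem t) (hcrit t) (hcrit (t + 1))
    rw [abs_of_nonneg (sub_nonneg.2 (hαmono t))] at hdrift
    refine hdrift.trans ?_
    have hC₁nn : 0 ≤ C₁ := (norm_nonneg _).trans hC
    gcongr ?_ / (μ * ?_) * _
    · exact sub_nonneg.2 (hαmono t)
    · nlinarith [mul_le_mul_of_nonneg_left hC hα₀.le]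
    · exact hstep t ht

/-- Under strong convexity of `G_{α₀}`, `L`-smoothness of the local costs,
non-increasing stepsizes with `α(0) ≤ min{(1+λ_m(W))/L, α₀}` and `α(t) ≥ aₙ` for `t ≤ t₀`,
the DGD iterates satisfy
`‖𝐱(t₀+1) − 𝐱_*^{α(t₀+1)}‖ ≤ ‖𝐱(0) − 𝐱_*^{α(0)}‖ + (2α₀C₁/(μaₙ))(α(0) − α(t₀+1))`. -/
theorem dgd_cumulative_tracking {m n : ℕ} (hm : 1 ≤ m) (hn : 1 ≤ n)
    (W : Matrix (Fin m) (Fin m) ℝ)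
    (hWsymm : W.IsSymm)
    (hWnonneg : ∀ i j, 0 ≤ W i j)
    (hWrow : ∀ i, ∑ j, W i j = 1)
    (hWdiag : ∀ i, 0 < W i i)
    (f : Fin m → EuclideanSpace ℝ (Fin n) → ℝ)
    (hdiff : ∀ k, Differentiable ℝ (f k))
    (L : ℝ) (hL : 0 < L)
    (hsmooth : ∀ k, ∀ x y, ‖gradient (f k) x - gradient (f k) y‖ ≤ L * ‖x - y‖)
    (lam : ℝ) (hlam_gt : -1 < lam)
    (hlam : ∀ u : EuclideanSpace ℝ (Fin m × Fin n),
      lam * ‖u‖ ^ 2 ≤ ∑ k : Fin m, ∑ j : Fin m, W k j * ∑ i : Fin n, u (k, i) * u (j, i))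
    (μ α₀ : ℝ) (hμ : 0 < μ) (hα₀ : 0 < α₀)
    (hGsc : StrongConvexWith μ (DGDG m n W f α₀))
    (xstar : ℝ → EuclideanSpace ℝ (Fin m × Fin n))
    (hmin : ∀ a ∈ Set.Ioc (0 : ℝ) α₀, ∀ y, DGDG m n W f a (xstar a) ≤ DGDG m n W f a y)
    (C₁ : ℝ) (hC₁pos : 0 < C₁)
    (hC₁ : ∀ s ∈ Set.Icc (0 : ℝ) 1, ∀ a ∈ Set.Ioc (0 : ℝ) α₀, ∀ b ∈ Set.Ioc (0 : ℝ) α₀,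
      ‖gradient (stackedF m n f) (xstar b + s • (xstar a - xstar b))‖ ≤ C₁)
    (α : ℕ → ℝ) (hαpos : ∀ t, 0 < α t) (hαmono : ∀ t, α (t + 1) ≤ α t)
    (hα0 : α 0 ≤ min ((1 + lam) / L) α₀)
    (x : ℕ → EuclideanSpace ℝ (Fin m × Fin n))
    (hiter : ∀ t, x (t + 1) = x t - gradient (DGDG m n W f (α t)) (x t))
    (aN : ℝ) (haN : 0 < aN) (t₀ : ℕ)
    (hstep : ∀ t ≤ t₀, aN ≤ α t) :
    ‖x (t₀ + 1) - xstar (α (t₀ + 1))‖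
      ≤ ‖x 0 - xstar (α 0)‖ + (2 * α₀ * C₁ / (μ * aN)) * (α 0 - α (t₀ + 1)) :=
  dgd_cumulative_tracking_general W hWsymm hWnonneg hWrow f hdiff L hL hsmooth lam hlam μ α₀ hμ hα₀
    hGsc xstar hmin C₁ hC₁ α hαpos hαmono hα0 x hiter aN haN t₀ hstep
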